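/- arXiv:1411.7652 — 3 statements merged into one kernel-verified Lean document; each statement's English description precedes it below -/
import Mathlib

section
/- Let N ≥ 2, L > 0, and let F : [-L, 0] → ℝ be continuous, nonnegative and nonincreasing (F(x) ≤ F(y) whenever x > y). Then there exists exactly one configuration -L ≤ x_N < x_{N-1} < ... < x_1 < x_0 = 0 such that, setting δ_k = x_{k-1} - x_k and f_k = δ_k^{-2} for k = 1, ..., N, one has f_{k+1} + F(x_k) = f_k for all k = 1, ..., N-1, and moreover either (x_N = -L and f_N ≥ F(-L)) or (x_N > -L and f_N = F(x_N)). -/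
/-!
Shooting from the right end. The force balance determines the whole configuration from the force
`u = f_1` in the first gap: `x_k = x_{k-1} - f_k^{-1/2}` and `f_{k+1} = f_k - F(x_k)`. Raising `u`
raises every `f_k` and, because `F` is nonincreasing, moves every `x_k` to the right. The
parameters for which the chain stays in `[-L, 0]` with `f_N ≥ F(x_N)` form a closed set, nonempty
(as `u → ∞` the chain collapses onto `0`) and bounded below by `L⁻²`. Equilibria are exactly its
least elements: at the least element one of the two boundary inequalities is an equality, since
otherwise `u` could be lowered, and conversely such an equality excludes every smaller parameter
by monotonicity. Outside `[-L, 0]` the force is extended by clamping.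
-/

/-- An equilibrium (fixed-point) configuration of `N+1` charges
`-L ≤ x N < ... < x 1 < x 0 = 0` on `[-L, 0]` under external force `F`:
with gaps `δ k = x (k-1) - x k` and `f k = (δ k)⁻²`, the force balance
`f (k+1) + F (x k) = f k` holds for `k = 1, ..., N-1`, and at the left end
either `x N = -L` with `f N ≥ F (-L)`, or `x N > -L` with `f N = F (x N)`. -/
def IsEquilib (N : ℕ) (L : ℝ) (F : ℝ → ℝ) (x : ℕ → ℝ) : Prop :=
  x 0 = 0 ∧ (∀ k < N, x (k + 1) < x k) ∧ -L ≤ x N ∧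
  (∀ k, 1 ≤ k → k < N →
    ((x k - x (k + 1)) ^ 2)⁻¹ + F (x k) = ((x (k - 1) - x k) ^ 2)⁻¹) ∧
  ((x N = -L ∧ F (-L) ≤ ((x (N - 1) - x N) ^ 2)⁻¹) ∨
   (-L < x N ∧ ((x (N - 1) - x N) ^ 2)⁻¹ = F (x N)))

open Set Filter Topology

namespace IsEquilib

variable {N : ℕ} {L : ℝ} {F G : ℝ → ℝ} {x y : ℕ → ℝ}

lemma mem_Icc (h : IsEquilib N L F x) {k : ℕ} (hk : k ≤ N) : x k ∈ Icc (-L) 0 := by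
  have hx := (strictAntiOn_Iic_of_succ_lt h.2.1).antitoneOn
  exact ⟨h.2.2.1.trans (hx hk (mem_Iic.2 le_rfl) hk),
    h.1 ▸ hx (mem_Iic.2 (Nat.zero_le N)) hk (Nat.zero_le k)⟩

lemma congr (h : IsEquilib N L F x) (hxy : ∀ k ≤ N, x k = y k)
    (hFG : EqOn F G (Icc (-L) 0)) : IsEquilib N L G y := by
  have hmem := fun {k} (hk : k ≤ N) => h.mem_Icc hk
  have hL : -L ∈ Icc (-L) 0 := ⟨le_rfl, (hmem le_rfl).1.trans (hmem le_rfl).2⟩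
  obtain ⟨h0, hdec, hxN, hbal, hb⟩ := h
  refine ⟨hxy 0 (Nat.zero_le N) ▸ h0, fun k hk => ?_, hxy N le_rfl ▸ hxN,
    fun k hk1 hk => ?_, ?_⟩
  · rw [← hxy k hk.le, ← hxy (k + 1) hk]
    exact hdec k hk
  · rw [← hxy k hk.le, ← hxy (k + 1) hk, ← hxy (k - 1) (by omega), ← hFG (hmem hk.le)]
    exact hbal k hk1 hk
  · rw [← hxy N le_rfl, ← hxy (N - 1) (by omega), ← hFG hL, ← hFG (hmem le_rfl)]
    exact hb

end IsEquilib

namespace Equilib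

/-- `(shoot G u k).1` is `x_k` and `(shoot G u k).2` is `f_{k+1}`, the force in the gap to the
left of `x_k`; the recursion only means something on `shootDomain`, where these forces are
positive. -/
noncomputable def shoot (G : ℝ → ℝ) (u : ℝ) : ℕ → ℝ × ℝ
  | 0 => (0, u)
  | k + 1 =>
    ((shoot G u k).1 - √(shoot G u k).2⁻¹,
      (shoot G u k).2 - G ((shoot G u k).1 - √(shoot G u k).2⁻¹))

def shootDomain (G : ℝ → ℝ) (k : ℕ) : Set ℝ := {u | ∀ j < k, 0 < (shoot G u j).2}

/-- Here `N = n + 1`, so that no truncated `N - 1` appears. -/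
def feasible (G : ℝ → ℝ) (L : ℝ) (n : ℕ) : Set ℝ :=
  {u | u ∈ shootDomain G (n + 1) ∧ -L ≤ (shoot G u (n + 1)).1 ∧
    G (shoot G u (n + 1)).1 ≤ (shoot G u n).2}

variable {G : ℝ → ℝ} {u v L : ℝ} {k n : ℕ}

lemma shoot_succ_fst : (shoot G u (k + 1)).1 = (shoot G u k).1 - √(shoot G u k).2⁻¹ := rfl

lemma shoot_succ_snd : (shoot G u (k + 1)).2 = (shoot G u k).2 - G (shoot G u (k + 1)).1 := rfl

lemma shoot_succ_fst_lt (h : 0 < (shoot G u k).2) : (shoot G u (k + 1)).1 < (shoot G u k).1 := by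
  rw [shoot_succ_fst, sub_lt_self_iff, Real.sqrt_pos, inv_pos]
  exact h

lemma inv_sq_sub_shoot_succ (h : 0 < (shoot G u k).2) :
    (((shoot G u k).1 - (shoot G u (k + 1)).1) ^ 2)⁻¹ = (shoot G u k).2 := by
  rw [shoot_succ_fst, sub_sub_cancel, Real.sq_sqrt (inv_nonneg.2 h.le), inv_inv]

lemma shoot_succ_fst_eq {a b : ℝ} (hx : (shoot G u k).1 = a)
    (hf : (shoot G u k).2 = ((a - b) ^ 2)⁻¹) (hba : b < a) : (shoot G u (k + 1)).1 = b := by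
  rw [shoot_succ_fst, hx, hf, inv_inv, Real.sqrt_sq (sub_nonneg.2 hba.le), sub_sub_cancel]

lemma shootDomain_anti : Antitone (shootDomain G) :=
  fun _ _ hkm _ hu j hj => hu j (hj.trans_le hkm)

lemma shootDomain_succ :
    u ∈ shootDomain G (k + 1) ↔ u ∈ shootDomain G k ∧ 0 < (shoot G u k).2 :=
  Nat.forall_lt_succ_right

lemma strictAntiOn_shoot_fst (hu : u ∈ shootDomain G k) :
    StrictAntiOn (fun j => (shoot G u j).1) (Iic k) :=
  strictAntiOn_Iic_of_succ_lt fun j hj => shoot_succ_fst_lt (hu j hj)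

lemma continuousAt_shoot (hG : Continuous G) :
    ∀ {k}, u ∈ shootDomain G k → ContinuousAt (fun v => shoot G v k) u
  | 0, _ => continuousAt_const.prodMk continuousAt_id
  | k + 1, hu => by
    have hk := continuousAt_shoot hG (shootDomain_anti k.le_succ hu)
    have hx : ContinuousAt (fun v => (shoot G v k).1 - √(shoot G v k).2⁻¹) u :=
      hk.fst.sub (hk.snd.inv₀ (hu k k.lt_succ_self).ne').sqrt
    exact hx.prodMk (hk.snd.sub (hG.continuousAt.comp hx))

lemma shootDomain_mem_nhds (hG : Continuous G) (hu : u ∈ shootDomain G k) :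
    shootDomain G k ∈ 𝓝 u :=
  (finite_Iio k).eventually_all.2 fun j hj =>
    (continuousAt_shoot hG (shootDomain_anti hj.le hu)).snd.eventually_const_lt (hu j hj)

lemma tendsto_shoot_atTop (hG : Continuous G) : ∀ k,
    Tendsto (fun u => (shoot G u k).1) atTop (𝓝 0) ∧
      Tendsto (fun u => (shoot G u k).2) atTop atTop
  | 0 => ⟨tendsto_const_nhds, tendsto_id⟩
  | k + 1 => by
    obtain ⟨hx, hf⟩ := tendsto_shoot_atTop hG k
    have hx' : Tendsto (fun u => (shoot G u (k + 1)).1) atTop (𝓝 0) := by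
      have := hx.sub (tendsto_inv_atTop_zero.comp hf).sqrt
      rwa [Real.sqrt_zero, sub_zero] at this
    have hf' := hf.atTop_add ((hG.tendsto 0).comp hx').neg
    simp only [← sub_eq_add_neg] at hf'
    exact ⟨hx', hf'⟩

lemma shoot_succ_fst_lt_of_lt (hv : 0 < (shoot G v k).2) (hf : (shoot G v k).2 < (shoot G u k).2)
    (hx : (shoot G v k).1 ≤ (shoot G u k).1) : (shoot G v (k + 1)).1 < (shoot G u (k + 1)).1 := by
  have : √(shoot G u k).2⁻¹ < √(shoot G v k).2⁻¹ :=
    Real.sqrt_lt_sqrt (inv_nonneg.2 (hv.trans hf).le) (inv_strictAnti₀ hv hf)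
  rw [shoot_succ_fst, shoot_succ_fst]
  linarith

lemma shoot_lt_shoot (hG : Antitone G) (hvu : v < u) :
    ∀ {k}, v ∈ shootDomain G k →
      (shoot G v k).2 < (shoot G u k).2 ∧ (shoot G v k).1 ≤ (shoot G u k).1
  | 0, _ => ⟨hvu, le_rfl⟩
  | k + 1, hv => by
    obtain ⟨hf, hx⟩ := shoot_lt_shoot hG hvu (shootDomain_anti k.le_succ hv)
    have hx' := shoot_succ_fst_lt_of_lt (hv k k.lt_succ_self) hf hx
    rw [shoot_succ_snd, shoot_succ_snd]
    exact ⟨by linarith [hG hx'.le], hx'.le⟩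

lemma inv_sq_le_shoot_snd (hu : u ∈ feasible G L n) {j : ℕ} (hj : j ≤ n) :
    (L ^ 2)⁻¹ ≤ (shoot G u j).2 := by
  have hx := (strictAntiOn_shoot_fst hu.1).antitoneOn
  have hx0 : (shoot G u j).1 ≤ 0 :=
    hx (mem_Iic.2 (Nat.zero_le _)) (mem_Iic.2 (by omega)) (Nat.zero_le j)
  have hxL : -L ≤ (shoot G u (j + 1)).1 :=
    hu.2.1.trans (hx (mem_Iic.2 (by omega)) (mem_Iic.2 le_rfl) (by omega))
  have hf : 0 < (shoot G u j).2 := hu.1 j (by omega)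
  have hgap : √(shoot G u j).2⁻¹ ≤ L := by
    rw [shoot_succ_fst] at hxL
    linarith
  obtain ⟨-, hfL⟩ := Real.sqrt_le_iff.1 hgap
  exact (inv_le_comm₀ hf (by nlinarith [Real.sqrt_pos.2 (inv_pos.2 hf)])).1 hfL

lemma isClosed_feasible (hG : Continuous G) (hL : 0 < L) : IsClosed (feasible G L n) := by
  refine isClosed_of_closure_subset fun u hu => ?_
  have hdom : ∀ k ≤ n + 1, u ∈ shootDomain G k := by
    intro k
    induction k with
    | zero => exact fun _ j hj => absurd hj j.not_lt_zero
    | succ k ih =>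
      intro hk
      have huk := ih (by omega)
      have hf := continuousWithinAt_const.closure_le hu
        (continuousAt_shoot hG huk).snd.continuousWithinAt
        fun v hv => inv_sq_le_shoot_snd hv (by omega)
      exact shootDomain_succ.2 ⟨huk, (by positivity : (0 : ℝ) < (L ^ 2)⁻¹).trans_le hf⟩
  have hx : ContinuousWithinAt (fun v => (shoot G v (n + 1)).1) (feasible G L n) u :=
    (continuousAt_shoot hG (hdom (n + 1) le_rfl)).fst.continuousWithinAt
  have hf : ContinuousWithinAt (fun v => (shoot G v n).2) (feasible G L n) u :=
    (continuousAt_shoot hG (hdom n (by omega))).snd.continuousWithinAt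
  exact ⟨hdom (n + 1) le_rfl, continuousWithinAt_const.closure_le hu hx fun v hv => hv.2.1,
    (hG.continuousAt.comp_continuousWithinAt hx).closure_le hu hf fun v hv => hv.2.2⟩

lemma feasible_nonempty (hG : Continuous G) (hL : 0 < L) : (feasible G L n).Nonempty := by
  obtain ⟨hx, -⟩ := tendsto_shoot_atTop hG (n + 1)
  obtain ⟨-, hf⟩ := tendsto_shoot_atTop hG n
  have hdom : ∀ᶠ u in atTop, u ∈ shootDomain G (n + 1) :=
    (finite_Iio (n + 1)).eventually_all.2 fun j _ =>
      (tendsto_shoot_atTop hG j).2.eventually_gt_atTop 0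
  have hxL : ∀ᶠ u in atTop, -L ≤ (shoot G u (n + 1)).1 := hx.eventually_const_le (by linarith)
  have hfG : ∀ᶠ u in atTop, G (shoot G u (n + 1)).1 ≤ (shoot G u n).2 := by
    filter_upwards [(hf.atTop_add ((hG.tendsto 0).comp hx).neg).eventually_ge_atTop 0] with u hu
    simp only [Function.comp_apply] at hu
    linarith
  exact (hdom.and (hxL.and hfG)).exists

lemma exists_isLeast_feasible (hG : Continuous G) (hL : 0 < L) :
    ∃ u, IsLeast (feasible G L n) u :=
  ⟨_, (isClosed_feasible hG hL).isLeast_csInf (feasible_nonempty hG hL)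
    ⟨(L ^ 2)⁻¹, fun _ hv => inv_sq_le_shoot_snd hv (Nat.zero_le n)⟩⟩

lemma boundary_of_isLeast_feasible (hG : Continuous G) (hu : IsLeast (feasible G L n) u) :
    (shoot G u (n + 1)).1 = -L ∨ (shoot G u n).2 = G (shoot G u (n + 1)).1 := by
  by_contra! h
  have hdom := hu.1.1
  have hx := (continuousAt_shoot hG hdom).fst
  have hf := (continuousAt_shoot hG (shootDomain_anti n.le_succ hdom)).snd
  have hS : ∀ᶠ v in 𝓝 u, v ∈ feasible G L n := by
    filter_upwards [shootDomain_mem_nhds hG hdom,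
      hx.eventually_const_lt (hu.1.2.1.lt_of_ne' h.1),
      (hf.sub (hG.continuousAt.comp hx)).eventually_const_lt
        (sub_pos.2 (hu.1.2.2.lt_of_ne' h.2))] with v hv hxv hfv
    exact ⟨hv, hxv.le, (sub_pos.1 hfv).le⟩
  obtain ⟨v, hv, hvu⟩ :=
    ((hS.filter_mono nhdsWithin_le_nhds).and (self_mem_nhdsWithin (s := Iio u))).exists
  exact (hu.2 hv).not_gt hvu

lemma isLeast_feasible_of_boundary (hG : Antitone G) (hu : u ∈ feasible G L n)
    (hb : (shoot G u (n + 1)).1 = -L ∨ (shoot G u n).2 = G (shoot G u (n + 1)).1) :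
    IsLeast (feasible G L n) u := by
  refine ⟨hu, fun v hv => not_lt.1 fun hvu => ?_⟩
  obtain ⟨hf, hx⟩ := shoot_lt_shoot hG hvu (shootDomain_anti n.le_succ hv.1)
  have hx' := shoot_succ_fst_lt_of_lt (hv.1 n n.lt_succ_self) hf hx
  rcases hb with hb | hb
  · linarith [hv.2.1]
  · linarith [hv.2.2, hG hx'.le]

lemma isEquilib_shoot_iff (hu : u ∈ shootDomain G (n + 1)) :
    IsEquilib (n + 1) L G (fun k => (shoot G u k).1) ↔
      u ∈ feasible G L n ∧
        ((shoot G u (n + 1)).1 = -L ∨ (shoot G u n).2 = G (shoot G u (n + 1)).1) := by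
  have hgap : ∀ k < n + 1,
      (((shoot G u k).1 - (shoot G u (k + 1)).1) ^ 2)⁻¹ = (shoot G u k).2 :=
    fun k hk => inv_sq_sub_shoot_succ (hu k hk)
  simp only [IsEquilib, Nat.add_sub_cancel, hgap n n.lt_succ_self]
  constructor
  · rintro ⟨-, -, hxL, -, ⟨hx, hf⟩ | ⟨-, hf⟩⟩
    · exact ⟨⟨hu, hxL, hx ▸ hf⟩, .inl hx⟩
    · exact ⟨⟨hu, hxL, hf.ge⟩, .inr hf⟩
  · rintro ⟨⟨-, hxL, hf⟩, hb⟩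
    refine ⟨rfl, fun k hk => shoot_succ_fst_lt (hu k hk), hxL, fun k hk1 hk => ?_, ?_⟩
    · obtain ⟨j, rfl⟩ := Nat.exists_eq_add_of_le' hk1
      rw [Nat.add_sub_cancel, hgap _ hk, hgap j (by omega), shoot_succ_snd]
      ring
    · rcases hxL.eq_or_lt with hx | hx
      · exact .inl ⟨hx.symm, hx ▸ hf⟩
      · exact .inr ⟨hx, hb.resolve_left hx.ne'⟩

lemma isEquilib_shoot_iff_isLeast (hGc : Continuous G) (hGa : Antitone G)
    (hu : u ∈ shootDomain G (n + 1)) :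
    IsEquilib (n + 1) L G (fun k => (shoot G u k).1) ↔ IsLeast (feasible G L n) u := by
  rw [isEquilib_shoot_iff hu]
  exact ⟨fun h => isLeast_feasible_of_boundary hGa h.1 h.2,
    fun h => ⟨h.1, boundary_of_isLeast_feasible hGc h⟩⟩

lemma _root_.IsEquilib.exists_eq_shoot {y : ℕ → ℝ} (hy : IsEquilib (n + 1) L G y) :
    ∃ u ∈ shootDomain G (n + 1), ∀ k ≤ n + 1, y k = (shoot G u k).1 := by
  obtain ⟨hy0, hdec, -, hbal, -⟩ := hy
  set u := ((y 0 - y 1) ^ 2)⁻¹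
  have key : ∀ k ≤ n,
      y k = (shoot G u k).1 ∧ (shoot G u k).2 = ((y k - y (k + 1)) ^ 2)⁻¹ := by
    intro k
    induction k with
    | zero => exact fun _ => ⟨hy0, rfl⟩
    | succ k ih =>
      intro hk
      obtain ⟨hx, hf⟩ := ih (by omega)
      have hx' := shoot_succ_fst_eq hx.symm hf (hdec k (by omega))
      refine ⟨hx'.symm, ?_⟩
      have hb := hbal (k + 1) (by omega) (by omega)
      rw [Nat.add_sub_cancel] at hb
      rw [shoot_succ_snd, hf, hx', ← hb]
      ring
  refine ⟨u, fun j hj => ?_, fun k hk => ?_⟩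
  · rw [(key j (by omega)).2]
    have := sub_pos.2 (hdec j hj)
    positivity
  · rcases Nat.lt_succ_iff_lt_or_eq.1 (Nat.lt_succ_of_le hk) with hk | rfl
    · exact (key k (by omega)).1
    · obtain ⟨hx, hf⟩ := key n le_rfl
      exact (shoot_succ_fst_eq hx.symm hf (hdec n n.lt_succ_self)).symm

end Equilib

open Equilib in
theorem existence_uniqueness_equilibrium_general
    (N : ℕ) (hN : 2 ≤ N) (L : ℝ) (hL : 0 < L) (F : ℝ → ℝ)
    (hFcont : ContinuousOn F (Set.Icc (-L) 0))
    (hFanti : AntitoneOn F (Set.Icc (-L) 0)) :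
    ∃ x : ℕ → ℝ, IsEquilib N L F x ∧
      ∀ y : ℕ → ℝ, IsEquilib N L F y → ∀ k ≤ N, y k = x k := by
  obtain ⟨n, rfl⟩ : ∃ n, N = n + 1 := ⟨N - 1, by omega⟩
  set G : ℝ → ℝ := fun z => F (projIcc (-L) 0 (by linarith) z)
  have hFG : EqOn F G (Icc (-L) 0) := fun z hz => by simp only [G, projIcc_of_mem _ hz]
  have hGc : Continuous G :=
    hFcont.comp_continuous (continuous_subtype_val.comp continuous_projIcc) fun z =>
      (projIcc _ _ _ z).2
  have hGa : Antitone G := fun a b hab =>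
    hFanti (projIcc _ _ _ a).2 (projIcc _ _ _ b).2 (monotone_projIcc _ hab)
  obtain ⟨u, hu⟩ := exists_isLeast_feasible hGc hL (n := n)
  refine ⟨fun k => (shoot G u k).1,
    ((isEquilib_shoot_iff_isLeast hGc hGa hu.1.1).2 hu).congr (fun _ _ => rfl) hFG.symm,
    fun y hy => ?_⟩
  obtain ⟨v, hv, hyv⟩ := (hy.congr (fun _ _ => rfl) hFG).exists_eq_shoot
  have hvu : v = u := ((isEquilib_shoot_iff_isLeast hGc hGa hv).1 (hy.congr hyv hFG)).unique hu
  exact hvu ▸ hyv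

/-- For `N ≥ 2`, `L > 0` and `F` continuous, nonnegative and
nonincreasing on `[-L, 0]`, the equilibrium configuration exists and is unique. -/
theorem existence_uniqueness_equilibrium
    (N : ℕ) (hN : 2 ≤ N) (L : ℝ) (hL : 0 < L) (F : ℝ → ℝ)
    (hFcont : ContinuousOn F (Set.Icc (-L) 0))
    (hFnonneg : ∀ z ∈ Set.Icc (-L) 0, 0 ≤ F z)
    (hFanti : AntitoneOn F (Set.Icc (-L) 0)) :
    ∃ x : ℕ → ℝ, IsEquilib N L F x ∧
      ∀ y : ℕ → ℝ, IsEquilib N L F y → ∀ k ≤ N, y k = x k :=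
  existence_uniqueness_equilibrium_general N hN L hL F hFcont hFanti
end

section
/- Let N ≥ 2, L > 0, F > 0, and set S(F) = F^{-1/2} · Σ_{k=1}^{N} k^{-1/2}. If S(F) ≤ L, then the unique equilibrium configuration on [-L, 0] for constant force F coincides with that of the auxiliary half-line model: its gaps are δ_k = ((N-k+1)F)^{-1/2}, f_N = F, and x_N = -S(F) > -L when S(F) < L. If S(F) ≥ L, then the equilibrium configuration satisfies x_N = -L. -/
/-!
Reading the force balance from the left end, the inverse-square gap forces form the arithmetic
progression `f N, f N + F, …, f N + (N - 1) F`, so the configuration is determined by the end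
force `c = f N` and has total length `∑_{j < N} (c + j F)^{-1/2}`, strictly decreasing in `c`.
The half-line solution is the case `c = F`, of length `S`. So if `S ≤ L` the left charge cannot be
pinned at `-L` with `c > F`, forcing `c = F`; and if `L ≤ S` it cannot be free, since then `c = F`
and `x N = -S ≤ -L`.
-/

/-- An equilibrium (fixed-point) configuration of `N+1` charges
`-L ≤ x N < ... < x 1 < x 0 = 0` on `[-L, 0]` under constant external force `F`:
with gaps `δ k = x (k-1) - x k` and `f k = (δ k)⁻²`, the force balance
`f (k+1) + F = f k` holds for `k = 1, ..., N-1`, and at the left end either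
`x N = -L` with `f N ≥ F`, or `x N > -L` with `f N = F`. Such a configuration
exists and is unique. -/
def IsEquilibConst (N : ℕ) (L F : ℝ) (x : ℕ → ℝ) : Prop :=
  x 0 = 0 ∧ (∀ k < N, x (k + 1) < x k) ∧ -L ≤ x N ∧
  (∀ k, 1 ≤ k → k < N →
    ((x k - x (k + 1)) ^ 2)⁻¹ + F = ((x (k - 1) - x k) ^ 2)⁻¹) ∧
  ((x N = -L ∧ F ≤ ((x (N - 1) - x N) ^ 2)⁻¹) ∨
   (-L < x N ∧ ((x (N - 1) - x N) ^ 2)⁻¹ = F))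

open Finset Real

noncomputable section

def gapForce (x : ℕ → ℝ) (k : ℕ) : ℝ := ((x (k - 1) - x k) ^ 2)⁻¹

def chainLength (N : ℕ) (F c : ℝ) : ℝ := ∑ j ∈ range N, (√(c + j * F))⁻¹

end

theorem eq_add_mul_of_add_eq {f : ℕ → ℝ} {N : ℕ} {F : ℝ}
    (h : ∀ k, 1 ≤ k → k < N → f (k + 1) + F = f k) {k : ℕ} (hk : 1 ≤ k) (hkN : k ≤ N) :
    f k = f N + (N - k : ℕ) * F := by
  induction hkN using Nat.decreasingInduction with
  | self => simp
  | of_succ k hkN ih =>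
    rw [← h k hk hkN, ih (by omega), Nat.sub_succ', Nat.cast_pred (by omega)]
    ring

theorem chainLength_strictAntiOn {N : ℕ} (hN : N ≠ 0) {F : ℝ} (hF : 0 ≤ F) :
    StrictAntiOn (chainLength N F) (Set.Ioi 0) := by
  intro a ha b _ hab
  refine sum_lt_sum_of_nonempty (nonempty_range_iff.mpr hN) fun j _ => ?_
  have hja : 0 < a + j * F := add_pos_of_pos_of_nonneg ha (by positivity)
  exact inv_strictAnti₀ (sqrt_pos.mpr hja) (sqrt_lt_sqrt hja.le (by linarith))

theorem chainLength_self (N : ℕ) (F : ℝ) :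
    chainLength N F F = (√F)⁻¹ * ∑ k ∈ Icc 1 N, (√(k : ℝ))⁻¹ := by
  rw [chainLength, mul_sum, ← Ico_add_one_right_eq_Icc, sum_Ico_eq_sum_range, add_tsub_cancel_right]
  refine sum_congr rfl fun j _ => ?_
  rw [show F + j * F = ((1 + j : ℕ) : ℝ) * F by push_cast; ring, sqrt_mul (by positivity), mul_inv,
    mul_comm]

namespace IsEquilibConst

variable {N : ℕ} {L F : ℝ} {x : ℕ → ℝ}

theorem gap_pos (hx : IsEquilibConst N L F x) {k : ℕ} (hk : 1 ≤ k) (hkN : k ≤ N) :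
    0 < x (k - 1) - x k := by
  have h := hx.2.1 (k - 1) (by omega)
  rw [Nat.sub_add_cancel hk] at h
  linarith

theorem gapForce_eq (hx : IsEquilibConst N L F x) {k : ℕ} (hk : 1 ≤ k) (hkN : k ≤ N) :
    gapForce x k = gapForce x N + (N - k : ℕ) * F :=
  eq_add_mul_of_add_eq hx.2.2.2.1 hk hkN

theorem gap_eq (hx : IsEquilibConst N L F x) {k : ℕ} (hk : 1 ≤ k) (hkN : k ≤ N) :
    x (k - 1) - x k = (√(gapForce x N + (N - k : ℕ) * F))⁻¹ := by
  rw [← hx.gapForce_eq hk hkN, gapForce, sqrt_inv, sqrt_sq (hx.gap_pos hk hkN).le, inv_inv]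

theorem neg_end_eq_chainLength (hx : IsEquilibConst N L F x) :
    -x N = chainLength N F (gapForce x N) := by
  have hgap (i : ℕ) (hi : i ∈ range N) :
      x i - x (i + 1) = (√(gapForce x N + (N - 1 - i : ℕ) * F))⁻¹ := by
    have hi := mem_range.mp hi
    rw [show N - 1 - i = N - (i + 1) by omega, ← hx.gap_eq (by omega) (by omega), Nat.add_sub_cancel]
  rw [chainLength, ← sum_range_reflect, ← sum_congr rfl hgap, sum_range_sub', hx.1, zero_sub]

theorem gapForce_end_eq_of_le (hx : IsEquilibConst N L F x) (hN : N ≠ 0) (hF : 0 < F)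
    (hSL : chainLength N F F ≤ L) : gapForce x N = F := by
  rcases hx.2.2.2.2 with ⟨hxN, hFc⟩ | ⟨-, hcF⟩
  · refine (hFc.eq_or_lt.resolve_right fun hlt => ?_).symm
    have := chainLength_strictAntiOn hN hF.le hF (hF.trans hlt) hlt
    have hlen := hx.neg_end_eq_chainLength
    rw [gapForce] at hlen
    linarith
  · exact hcF

end IsEquilibConst

theorem comparison_with_halfline_model_general
    (N : ℕ) (hN : 2 ≤ N) (L F : ℝ) (hF : 0 < F)
    (x : ℕ → ℝ) (hx : IsEquilibConst N L F x)
    (S : ℝ) (hS : S = (Real.sqrt F)⁻¹ * ∑ k ∈ Finset.Icc 1 N, (Real.sqrt (k : ℝ))⁻¹) :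
    (S ≤ L →
      (∀ k, 1 ≤ k → k ≤ N →
        x (k - 1) - x k = (Real.sqrt (((N : ℝ) - (k : ℝ) + 1) * F))⁻¹) ∧
      ((x (N - 1) - x N) ^ 2)⁻¹ = F ∧
      x N = -S ∧ (S < L → -L < x N)) ∧
    (L ≤ S → x N = -L) := by
  rw [← chainLength_self] at hS
  have hfree (hcF : gapForce x N = F) : x N = -S := by
    have := hx.neg_end_eq_chainLength
    rw [hcF] at this
    linarith
  refine ⟨fun hSL => ?_, fun hLS => ?_⟩
  · have hcF := hx.gapForce_end_eq_of_le (by omega) hF (hS ▸ hSL)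
    refine ⟨fun k hk hkN => ?_, hcF, hfree hcF, fun hlt => by linarith [hfree hcF]⟩
    rw [hx.gap_eq hk hkN, hcF, Nat.cast_sub hkN]
    ring_nf
  · rcases hx.2.2.2.2 with ⟨hxN, -⟩ | ⟨hxN, hcF⟩
    · exact hxN
    · linarith [hfree hcF]

/-- Let `S F = F^(-1/2) ∑_{k=1}^N k^(-1/2)`. If `S F ≤ L`,
the equilibrium configuration on `[-L, 0]` coincides with the auxiliary
half-line solution: its gaps are `δ k = ((N-k+1) F)^(-1/2)`, `f N = F`, and
`x N = -S F`, with `x N > -L` when `S F < L`. If `S F ≥ L` then `x N = -L`. -/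
theorem comparison_with_halfline_model
    (N : ℕ) (hN : 2 ≤ N) (L F : ℝ) (hL : 0 < L) (hF : 0 < F)
    (x : ℕ → ℝ) (hx : IsEquilibConst N L F x)
    (S : ℝ) (hS : S = (Real.sqrt F)⁻¹ * ∑ k ∈ Finset.Icc 1 N, (Real.sqrt (k : ℝ))⁻¹) :
    (S ≤ L →
      (∀ k, 1 ≤ k → k ≤ N →
        x (k - 1) - x k = (Real.sqrt (((N : ℝ) - (k : ℝ) + 1) * F))⁻¹) ∧
      ((x (N - 1) - x N) ^ 2)⁻¹ = F ∧
      x N = -S ∧ (S < L → -L < x N)) ∧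
    (L ≤ S → x N = -L) :=
  comparison_with_halfline_model_general N hN L F hF x hx S hS
end

section
/- Fix L > 0, c > 0 and γ > 1, and for each N ≥ 2 let x_N^{(N)} be the position of the leftmost particle in the unique equilibrium configuration on [-L, 0] for constant force F = c N^γ. Then x_N^{(N)} → 0 as N → ∞. Consequently, for every ε ∈ (0, L), the fraction of the N+1 particles lying in [-ε, 0] tends to 1, i.e. the empirical particle density converges to the Dirac delta at 0 in the sense of distributions. -/
lemma sum_inv_sqrt_le (n : ℕ) :
    ∑ k ∈ Finset.range n, (Real.sqrt ((k : ℝ) + 1))⁻¹ ≤ 2 * Real.sqrt n := by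
  induction n with
  | zero => simp
  | succ n ih =>
    rw [Finset.sum_range_succ]
    have ha : (0:ℝ) ≤ Real.sqrt n := Real.sqrt_nonneg _
    have hb : (0:ℝ) < Real.sqrt ((n:ℝ) + 1) := Real.sqrt_pos.2 (by positivity)
    have ha2 : Real.sqrt n ^ 2 = (n:ℝ) := Real.sq_sqrt (by positivity)
    have hb2 : Real.sqrt ((n:ℝ)+1) ^ 2 = (n:ℝ)+1 := Real.sq_sqrt (by positivity)
    have key : 2 * Real.sqrt n * Real.sqrt ((n:ℝ)+1) ≤ 2*(n:ℝ)+1 := by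
      nlinarith [sq_nonneg (Real.sqrt n - Real.sqrt ((n:ℝ)+1))]
    have h2 : (Real.sqrt ((n:ℝ)+1))⁻¹ ≤ 2 * Real.sqrt ((n:ℝ)+1) - 2 * Real.sqrt n := by
      rw [inv_le_iff_one_le_mul₀ hb]
      nlinarith
    push_cast
    linarith

lemma equilib_anti {N : ℕ} {L F : ℝ} {x : ℕ → ℝ} (h : IsEquilibConst N L F x) :
    ∀ k ≤ N, x N ≤ x k := by
  obtain ⟨-, hlt, -⟩ := h
  have key : ∀ m, m ≤ N → x N ≤ x (N - m) := by
    intro m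
    induction m with
    | zero => simp
    | succ m ih =>
      intro hm
      have h1 := ih (by omega)
      have h2 : x (N - m - 1 + 1) < x (N - m - 1) := hlt _ (by omega)
      have e : N - m - 1 + 1 = N - m := by omega
      rw [e] at h2
      have e2 : N - (m + 1) = N - m - 1 := by omega
      rw [e2]
      linarith
  intro k hk
  have := key (N - k) (by omega)
  rwa [show N - (N - k) = k by omega] at this

lemma equilib_leftmost_bound {N : ℕ} {L F : ℝ} {x : ℕ → ℝ}
    (hF : 0 < F) (hN : 1 ≤ N) (h : IsEquilibConst N L F x) :
    -(2 * Real.sqrt N * (Real.sqrt F)⁻¹) ≤ x N := by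
  obtain ⟨h0, hlt, hlb, hrec, hend⟩ := h
  -- force bound by downward induction
  have claimA : ∀ j < N, ((j:ℝ) + 1) * F ≤ ((x (N-1-j) - x (N-1-j+1)) ^ 2)⁻¹ := by
    intro j
    induction j with
    | zero =>
      intro _
      have e : N - 1 - 0 + 1 = N := by omega
      rw [e]
      simp only [Nat.cast_zero, zero_add, one_mul, Nat.sub_zero]
      rcases hend with ⟨-, hf⟩ | ⟨-, hf⟩
      · exact hf
      · exact hf.ge
    | succ j ih =>
      intro hj
      have hIH := ih (by omega)
      have hrec' := hrec (N - 1 - j) (by omega) (by omega)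
      have e1 : N - 1 - j - 1 = N - 1 - (j + 1) := by omega
      have e2 : N - 1 - (j + 1) + 1 = N - 1 - j := by omega
      rw [e1] at hrec'
      rw [e2]
      push_cast
      push_cast at hIH
      linarith
  -- gap bound
  have gap : ∀ k < N, x k - x (k + 1) ≤ (Real.sqrt ((N - k : ℕ) : ℝ))⁻¹ * (Real.sqrt F)⁻¹ := by
    intro k hk
    have hA := claimA (N - 1 - k) (by omega)
    rw [show N - 1 - (N - 1 - k) = k by omega] at hA
    have hc : ((N - 1 - k : ℕ) : ℝ) + 1 = ((N - k : ℕ) : ℝ) := by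
      have : N - 1 - k + 1 = N - k := by omega
      exact_mod_cast congrArg (Nat.cast : ℕ → ℝ) this
    rw [hc] at hA
    set m : ℝ := ((N - k : ℕ) : ℝ) with hm
    have hm1 : (1:ℝ) ≤ m := by
      rw [hm]
      exact_mod_cast (show 1 ≤ N - k by omega)
    have hg : 0 < x k - x (k + 1) := sub_pos.2 (hlt k hk)
    have hmF : 0 < m * F := by positivity
    have hsq : (x k - x (k+1)) ^ 2 ≤ (m * F)⁻¹ := by
      have := inv_anti₀ hmF hA
      rwa [inv_inv] at this
    calc x k - x (k+1) = Real.sqrt ((x k - x (k+1))^2) := (Real.sqrt_sq hg.le).symm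
      _ ≤ Real.sqrt ((m * F)⁻¹) := Real.sqrt_le_sqrt hsq
      _ = (Real.sqrt m)⁻¹ * (Real.sqrt F)⁻¹ := by
          rw [Real.sqrt_inv, Real.sqrt_mul (by linarith), mul_inv]
  -- telescoping sum
  have tele : x 0 - x N = ∑ k ∈ Finset.range N, (x k - x (k + 1)) :=
    (Finset.sum_range_sub' x N).symm
  have hsum : x 0 - x N ≤ (∑ k ∈ Finset.range N, (Real.sqrt (((N - k : ℕ)) : ℝ))⁻¹) * (Real.sqrt F)⁻¹ := by
    rw [tele, Finset.sum_mul]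
    exact Finset.sum_le_sum fun k hk => gap k (Finset.mem_range.1 hk)
  have hreflect : ∑ k ∈ Finset.range N, (Real.sqrt (((N - k : ℕ)) : ℝ))⁻¹
      = ∑ k ∈ Finset.range N, (Real.sqrt ((k : ℝ) + 1))⁻¹ := by
    rw [← Finset.sum_range_reflect (fun k => (Real.sqrt ((k : ℝ) + 1))⁻¹) N]
    refine Finset.sum_congr rfl fun k hk => ?_
    have hk' := Finset.mem_range.1 hk
    congr 1
    have : ((N - k : ℕ) : ℝ) = ((N - 1 - k : ℕ) : ℝ) + 1 := by
      have : N - 1 - k + 1 = N - k := by omega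
      exact_mod_cast (congrArg (Nat.cast : ℕ → ℝ) this).symm
    rw [this]
  have hfin : x 0 - x N ≤ 2 * Real.sqrt N * (Real.sqrt F)⁻¹ := by
    have hFpos : (0:ℝ) ≤ (Real.sqrt F)⁻¹ := by positivity
    calc x 0 - x N ≤ (∑ k ∈ Finset.range N, (Real.sqrt (((N - k : ℕ)) : ℝ))⁻¹) * (Real.sqrt F)⁻¹ := hsum
      _ = (∑ k ∈ Finset.range N, (Real.sqrt ((k : ℝ) + 1))⁻¹) * (Real.sqrt F)⁻¹ := by rw [hreflect]
      _ ≤ (2 * Real.sqrt N) * (Real.sqrt F)⁻¹ :=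
          mul_le_mul_of_nonneg_right (sum_inv_sqrt_le N) hFpos
      _ = 2 * Real.sqrt N * (Real.sqrt F)⁻¹ := by ring
  rw [h0] at hfin
  linarith

/-- For force `F = c N^γ` with `γ > 1`, the leftmost particle
`x N N` of the equilibrium configuration tends to `0`; consequently, for every
`ε ∈ (0, L)` the fraction of the `N+1` particles in `[-ε, 0]` tends to `1`
(the empirical density converges to the Dirac delta at `0`). -/
theorem delta_concentration_supercritical
    (L c γ : ℝ) (hL : 0 < L) (hc : 0 < c) (hγ : 1 < γ)
    (x : ℕ → ℕ → ℝ)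
    (hx : ∀ N, 2 ≤ N → IsEquilibConst N L (c * (N : ℝ) ^ γ) (x N)) :
    Filter.Tendsto (fun N => x N N) Filter.atTop (nhds 0) ∧
    ∀ ε ∈ Set.Ioo (0 : ℝ) L,
      Filter.Tendsto
        (fun N : ℕ => ({k | k ≤ N ∧ -ε ≤ x N k}.ncard : ℝ) / ((N : ℝ) + 1))
        Filter.atTop (nhds 1) := by
  -- the explicit bound
  set B : ℕ → ℝ := fun N => 2 * Real.sqrt N * (Real.sqrt (c * (N:ℝ) ^ γ))⁻¹ with hB
  have hB0 : Filter.Tendsto B Filter.atTop (nhds 0) := by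
    have hev : ∀ᶠ N : ℕ in Filter.atTop,
        2 * (Real.sqrt c)⁻¹ * ((N:ℝ)) ^ (-((γ-1)/2)) = B N := by
      filter_upwards [Filter.eventually_ge_atTop 1] with N hN
      have ht : (0:ℝ) < (N:ℝ) := by exact_mod_cast Nat.lt_of_lt_of_le Nat.zero_lt_one hN
      have h1 : Real.sqrt (c * (N:ℝ) ^ γ) = Real.sqrt c * (N:ℝ) ^ (γ/2) := by
        rw [Real.sqrt_mul hc.le, Real.sqrt_eq_rpow ((N:ℝ) ^ γ), ← Real.rpow_mul ht.le,
          show γ * (1/2) = γ/2 by ring]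
      have h2 : Real.sqrt (N:ℝ) = (N:ℝ) ^ ((1:ℝ)/2) := Real.sqrt_eq_rpow (N:ℝ)
      have h3 : ((N:ℝ)) ^ (-((γ-1)/2)) = (N:ℝ) ^ ((1:ℝ)/2) * ((N:ℝ) ^ (γ/2))⁻¹ := by
        rw [← Real.rpow_neg ht.le, ← Real.rpow_add ht]
        ring_nf
      rw [hB]
      simp only [h1, h2, h3, mul_inv]
      ring
    have hlim : Filter.Tendsto (fun N : ℕ => 2 * (Real.sqrt c)⁻¹ * ((N:ℝ)) ^ (-((γ-1)/2)))
        Filter.atTop (nhds 0) := by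
      have h1 : Filter.Tendsto (fun t : ℝ => t ^ (-((γ-1)/2))) Filter.atTop (nhds 0) :=
        tendsto_rpow_neg_atTop (by linarith)
      have h2 := (h1.comp tendsto_natCast_atTop_atTop).const_mul (2 * (Real.sqrt c)⁻¹)
      simpa using h2
    exact hlim.congr' hev
  have hF : ∀ N : ℕ, 2 ≤ N → (0:ℝ) < c * (N:ℝ) ^ γ := by
    intro N hN
    have hN0 : (0:ℝ) < (N:ℝ) := by exact_mod_cast Nat.lt_of_lt_of_le Nat.zero_lt_two hN
    exact mul_pos hc (Real.rpow_pos_of_pos hN0 γ)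
  have upper : ∀ N : ℕ, 2 ≤ N → x N N ≤ 0 := by
    intro N hN
    have h := hx N hN
    have := equilib_anti h 0 (Nat.zero_le N)
    rwa [h.1] at this
  have lower : ∀ N : ℕ, 2 ≤ N → -(B N) ≤ x N N := fun N hN =>
    equilib_leftmost_bound (hF N hN) (by omega) (hx N hN)
  have part1 : Filter.Tendsto (fun N => x N N) Filter.atTop (nhds 0) := by
    refine tendsto_of_tendsto_of_tendsto_of_le_of_le' (f := fun N => x N N)
      (g := fun N => -(B N)) (h := fun _ => (0:ℝ)) ?_ tendsto_const_nhds ?_ ?_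
    · simpa using hB0.neg
    · filter_upwards [Filter.eventually_ge_atTop 2] with N hN using lower N hN
    · filter_upwards [Filter.eventually_ge_atTop 2] with N hN using upper N hN
  refine ⟨part1, fun ε hε => ?_⟩
  obtain ⟨hε0, hεL⟩ := hε
  have hev : ∀ᶠ N : ℕ in Filter.atTop, -ε < x N N :=
    part1.eventually (eventually_gt_nhds (by linarith))
  have heq : ∀ᶠ N : ℕ in Filter.atTop,
      (1:ℝ) = ({k | k ≤ N ∧ -ε ≤ x N k}.ncard : ℝ) / ((N : ℝ) + 1) := by
    filter_upwards [hev, Filter.eventually_ge_atTop 2] with N h1 h2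
    have hset : {k | k ≤ N ∧ -ε ≤ x N k} = ↑(Finset.Iic N) := by
      ext k
      simp only [Set.mem_setOf_eq, Finset.coe_Iic, Set.mem_Iic]
      refine ⟨And.left, fun hk => ⟨hk, le_trans h1.le (equilib_anti (hx N h2) k hk)⟩⟩
    rw [hset, Set.ncard_coe_finset, Nat.card_Iic]
    have : ((N:ℝ) + 1) ≠ 0 := by positivity
    push_cast
    field_simp
  exact Filter.Tendsto.congr' heq tendsto_const_nhds
end
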